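/- For every k ≥ 1 and every real q with 0 ≤ q < 1, the family indexed by all Young diagrams ν with terms Dim_k(ν)²·q^{|ν|} has sum (1 − q)^{−k²} (HasSum). This is the normalization identity for the time-zero marginal of the Geometric RSK process built from k² i.i.d. geometric(q) random variables. -/

import Mathlib

/-- A function `f : ℕ × ℕ → ℕ` is a semistandard Young tableau of skew shape `ν / μ`
with entries at most `k` if it vanishes off the cells of `ν` not in `μ`, takes values
in `{1, …, k}` on those cells, is weakly increasing along each row and strictly
increasing down each column. -/
def IsSkewSSYT (k : ℕ) (μ ν : YoungDiagram) (f : ℕ × ℕ → ℕ) : Prop :=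
  (∀ c : ℕ × ℕ, c ∉ ν.cells \ μ.cells → f c = 0) ∧
  (∀ c ∈ ν.cells \ μ.cells, 1 ≤ f c ∧ f c ≤ k) ∧
  (∀ i j1 j2 : ℕ, (i, j1) ∈ ν.cells \ μ.cells → (i, j2) ∈ ν.cells \ μ.cells →
    j1 < j2 → f (i, j1) ≤ f (i, j2)) ∧
  (∀ i1 i2 j : ℕ, (i1, j) ∈ ν.cells \ μ.cells → (i2, j) ∈ ν.cells \ μ.cells →
    i1 < i2 → f (i1, j) < f (i2, j))

/-- `DimK k μ ν` is the number of semistandard Young tableaux of skew shape `ν / μ`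
with entries at most `k`. -/
noncomputable def DimK (k : ℕ) (μ ν : YoungDiagram) : ℕ :=
  Set.ncard {f : ℕ × ℕ → ℕ | IsSkewSSYT k μ ν f}

/-!
Write `λ ≺ ν` when `ν / λ` is a horizontal strip. Deleting the entries `b + 1` of a tableau gives
`Dim_{b+1}(ν) = ∑_{λ ≺ ν} Dim_b(λ)`. Fomin's local rule matches the `ν` with `μ ≺ ν` and `λ ≺ ν`
with the pairs `(n, τ)`, `n ∈ ℕ`, `τ ≺ μ`, `τ ≺ λ`, so that `|ν| - |μ| = n + |λ| - |τ|`; with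
weights `r ^ |ν / μ|` this is the commutation relation `D U = (1 - r)⁻¹ U D` of the down and up
operators. Iterating it gives `∑_{μ ≺ ν} r ^ |ν / μ| Dim_b(ν) = (1 - r)^{-b} Dim_b(μ)`, and then
`∑_ν Dim_a(ν) Dim_k(ν) r ^ |ν| = (1 - r)^{-ak}` by induction on `a`. All sums are taken in `ℝ≥0∞`,
where they can be reordered freely.
-/

open scoped ENNReal NNReal

namespace YoungDiagram

theorem rowLen_le_rowLen_iff {μ ν : YoungDiagram} {i i' : ℕ} :
    μ.rowLen i ≤ ν.rowLen i' ↔ ∀ j, (i, j) ∈ μ → (i', j) ∈ ν := by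
  simp only [mem_iff_lt_rowLen]
  exact forall_lt_iff_le.symm

theorem le_iff_rowLen_le {μ ν : YoungDiagram} : μ ≤ ν ↔ ∀ i, μ.rowLen i ≤ ν.rowLen i := by
  simp only [rowLen_le_rowLen_iff]
  exact ⟨fun h i j hij => h hij, fun h c hc => h c.1 c.2 hc⟩

theorem ext_rowLen {μ ν : YoungDiagram} (h : ∀ i, μ.rowLen i = ν.rowLen i) : μ = ν :=
  le_antisymm (le_iff_rowLen_le.mpr fun i => (h i).le) (le_iff_rowLen_le.mpr fun i => (h i).ge)

theorem rowLen_sup (μ ν : YoungDiagram) (i : ℕ) :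
    (μ ⊔ ν).rowLen i = max (μ.rowLen i) (ν.rowLen i) :=
  eq_of_forall_lt_iff fun j => by simp [← mem_iff_lt_rowLen]

theorem rowLen_inf (μ ν : YoungDiagram) (i : ℕ) :
    (μ ⊓ ν).rowLen i = min (μ.rowLen i) (ν.rowLen i) :=
  eq_of_forall_lt_iff fun j => by simp [← mem_iff_lt_rowLen]

theorem rowLen_colLen_zero (μ : YoungDiagram) : μ.rowLen (μ.colLen 0) = 0 :=
  Nat.eq_zero_of_not_pos fun h => (mem_iff_lt_colLen.mp (mem_iff_lt_rowLen.mpr h)).false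

theorem card_eq_sum_rowLen (μ : YoungDiagram) {N : ℕ} (hN : μ.rowLen N = 0) :
    μ.card = ∑ i ∈ Finset.range N, μ.rowLen i := by
  have hrow : ∀ c ∈ μ.cells, c.1 ∈ Finset.range N := by
    intro c hc
    by_contra hcN
    have := μ.rowLen_anti N c.1 (by simpa using hcN)
    rw [mem_cells, ← Prod.mk.eta (p := c), mem_iff_lt_rowLen] at hc
    omega
  rw [YoungDiagram.card, Finset.card_eq_sum_card_fiberwise hrow]
  exact Finset.sum_congr rfl fun i _ => (rowLen_eq_card μ).symm

theorem card_mono : Monotone YoungDiagram.card := fun _ _ h =>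
  Finset.card_le_card (cells_subset_iff.mpr h)

theorem card_sup_add_card_inf (μ ν : YoungDiagram) :
    (μ ⊔ ν).card + (μ ⊓ ν).card = μ.card + ν.card := by
  rw [YoungDiagram.card, YoungDiagram.card, cells_sup, cells_inf, Finset.card_union_add_card_inter]

/-- The Young diagram with row lengths `r` when `r` is antitone and vanishes at `N`
(`rowLen_ofRowLen`). -/
def ofRowLen (r : ℕ → ℕ) (N : ℕ) : YoungDiagram where
  cells := {c ∈ Finset.range N ×ˢ Finset.range (r 0) | ∀ i ≤ c.1, c.2 < r i}
  isLowerSet := by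
    rintro ⟨i, j⟩ ⟨i', j'⟩ ⟨hi, hj⟩ h
    simp only [Finset.coe_filter, Finset.mem_product, Finset.mem_range, Set.mem_ofPred_eq]
      at hi hj h ⊢
    exact ⟨⟨by omega, by omega⟩, fun i'' hi'' => hj.trans_lt (h.2 i'' (hi''.trans hi))⟩

theorem mem_ofRowLen {r : ℕ → ℕ} (hr : Antitone r) {N : ℕ} (hN : r N = 0) {c : ℕ × ℕ} :
    c ∈ ofRowLen r N ↔ c.2 < r c.1 := by
  rw [← mem_cells]
  simp only [ofRowLen, Finset.mem_filter, Finset.mem_product, Finset.mem_range]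
  refine ⟨fun h => h.2 _ le_rfl, fun hc => ⟨⟨?_, (hc.trans_le (hr (Nat.zero_le _)))⟩,
    fun i hi => hc.trans_le (hr hi)⟩⟩
  by_contra! hNc
  have := hr hNc
  omega

theorem rowLen_ofRowLen {r : ℕ → ℕ} (hr : Antitone r) {N : ℕ} (hN : r N = 0) (i : ℕ) :
    (ofRowLen r N).rowLen i = r i :=
  eq_of_forall_lt_iff fun _ => by rw [← mem_iff_lt_rowLen, mem_ofRowLen hr hN]

end YoungDiagram

open YoungDiagram

def IsHorizontalStrip (μ ν : YoungDiagram) : Prop :=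
  μ ≤ ν ∧ ∀ i, ν.rowLen (i + 1) ≤ μ.rowLen i

theorem isHorizontalStrip_bot_iff {μ : YoungDiagram} : IsHorizontalStrip μ ⊥ ↔ μ = ⊥ :=
  ⟨fun h => le_bot_iff.mp h.1, by rintro rfl; exact ⟨le_rfl, fun i => rowLen_anti ⊥ _ _ i.le_succ⟩⟩

section Tableau

variable {k b : ℕ} {ν l : YoungDiagram} {f g : ℕ × ℕ → ℕ}

theorem isSkewSSYT_bot_iff : IsSkewSSYT k ⊥ ν f ↔
    (∀ c, c ∉ ν → f c = 0) ∧ (∀ c ∈ ν, 1 ≤ f c ∧ f c ≤ k) ∧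
    (∀ i j₁ j₂, j₁ < j₂ → (i, j₂) ∈ ν → f (i, j₁) ≤ f (i, j₂)) ∧
    (∀ i₁ i₂ j, i₁ < i₂ → (i₂, j) ∈ ν → f (i₁, j) < f (i₂, j)) := by
  simp only [IsSkewSSYT, cells_bot, Finset.sdiff_empty, mem_cells]
  constructor
  · rintro ⟨hzero, hrange, hrow, hcol⟩
    exact ⟨hzero, hrange, fun i j₁ j₂ hj h => hrow i j₁ j₂ (ν.up_left_mem le_rfl hj.le h) h hj,
      fun i₁ i₂ j hi h => hcol i₁ i₂ j (ν.up_left_mem hi.le le_rfl h) h hi⟩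
  · rintro ⟨hzero, hrange, hrow, hcol⟩
    exact ⟨hzero, hrange, fun i j₁ j₂ _ h hj => hrow i j₁ j₂ hj h,
      fun i₁ i₂ j _ h hi => hcol i₁ i₂ j hi h⟩

theorem finite_setOf_isSkewSSYT_bot (k : ℕ) (ν : YoungDiagram) :
    {f | IsSkewSSYT k ⊥ ν f}.Finite := by
  refine Set.Finite.of_finite_image
    (f := fun f (c : ν.cells) => (⟨min (f c) k, by omega⟩ : Fin (k + 1)))
    (Set.toFinite _) fun f hf g hg hfg => funext fun c => ?_
  obtain ⟨hf0, hf1, -⟩ := isSkewSSYT_bot_iff.mp hf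
  obtain ⟨hg0, hg1, -⟩ := isSkewSSYT_bot_iff.mp hg
  by_cases hc : c ∈ ν
  · have hmin : min (f c) k = min (g c) k := Fin.ext_iff.mp (congr_fun hfg ⟨c, hc⟩)
    have := hf1 c hc
    have := hg1 c hc
    omega
  · rw [hf0 c hc, hg0 c hc]

theorem dimK_bot_eq_tsum (k : ℕ) (ν : YoungDiagram) :
    (DimK k ⊥ ν : ℝ≥0∞) = ∑' _ : {f // IsSkewSSYT k ⊥ ν f}, 1 := by
  rw [ENNReal.tsum_one, DimK, ← ENat.toENNReal_coe,
    (finite_setOf_isSkewSSYT_bot k ν).cast_ncard_eq]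
  rfl

theorem isSkewSSYT_bot_bot_iff : IsSkewSSYT k ⊥ ⊥ f ↔ f = 0 := by
  simp [isSkewSSYT_bot_iff, funext_iff]

theorem not_isSkewSSYT_zero_bot (hν : ν ≠ ⊥) : ¬IsSkewSSYT 0 ⊥ ν f := by
  obtain ⟨c, hc⟩ : ∃ c, c ∈ ν := by
    by_contra! h
    exact hν (le_bot_iff.mp fun c hc => (h c hc).elim)
  intro hf
  have := ((isSkewSSYT_bot_iff.mp hf).2.1 c hc)
  omega

theorem dimK_bot_bot (k : ℕ) : DimK k ⊥ ⊥ = 1 := by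
  simp [DimK, isSkewSSYT_bot_bot_iff]

theorem dimK_zero_bot_of_ne_bot (hν : ν ≠ ⊥) : DimK 0 ⊥ ν = 0 := by
  simp [DimK, not_isSkewSSYT_zero_bot hν]

theorem IsSkewSSYT.monotone (hf : IsSkewSSYT k ⊥ ν f) {i i' j j' : ℕ} (hi : i ≤ i')
    (hj : j ≤ j') (h : (i', j') ∈ ν) : f (i, j) ≤ f (i', j') := by
  obtain ⟨-, -, hrow, hcol⟩ := isSkewSSYT_bot_iff.mp hf
  calc f (i, j) ≤ f (i, j') := by
        rcases hj.eq_or_lt with rfl | hj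
        exacts [le_rfl, hrow i j j' hj (ν.up_left_mem hi le_rfl h)]
    _ ≤ f (i', j') := by
        rcases hi.eq_or_lt with rfl | hi
        exacts [le_rfl, (hcol i i' j' hi h).le]

def IsSkewSSYT.sublevel (hf : IsSkewSSYT k ⊥ ν f) (b : ℕ) : YoungDiagram where
  cells := {c ∈ ν.cells | f c ≤ b}
  isLowerSet := by
    rintro ⟨i, j⟩ ⟨i', j'⟩ ⟨hi, hj⟩ h
    simp only [Finset.coe_filter, mem_cells, Set.mem_ofPred_eq] at hi hj h ⊢
    exact ⟨ν.up_left_mem hi hj h.1, (hf.monotone hi hj h.1).trans h.2⟩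

theorem IsSkewSSYT.mem_sublevel (hf : IsSkewSSYT k ⊥ ν f) {c : ℕ × ℕ} :
    c ∈ hf.sublevel b ↔ c ∈ ν ∧ f c ≤ b := by
  simp [← mem_cells, sublevel]

/-- Column-strictness: the cells of `ν` with entry `b + 1` lie in distinct columns. -/
theorem IsSkewSSYT.isHorizontalStrip_sublevel (hf : IsSkewSSYT (b + 1) ⊥ ν f) :
    IsHorizontalStrip (hf.sublevel b) ν := by
  obtain ⟨-, hrange, -, hcol⟩ := isSkewSSYT_bot_iff.mp hf
  refine ⟨fun c hc => (hf.mem_sublevel.mp hc).1, fun i => rowLen_le_rowLen_iff.mpr fun j h => ?_⟩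
  have := hcol i (i + 1) j i.lt_succ_self h
  have := (hrange _ h).2
  exact hf.mem_sublevel.mpr ⟨ν.up_left_mem i.le_succ le_rfl h, by omega⟩

theorem IsSkewSSYT.truncate (hf : IsSkewSSYT (b + 1) ⊥ ν f) :
    IsSkewSSYT b ⊥ (hf.sublevel b) (fun c => if f c ≤ b then f c else 0) := by
  obtain ⟨hzero, hrange, hrow, hcol⟩ := isSkewSSYT_bot_iff.mp hf
  rw [isSkewSSYT_bot_iff]
  simp only [hf.mem_sublevel]
  refine ⟨fun c hc => ?_, fun c hc => ?_, fun i j₁ j₂ hj h => ?_, fun i₁ i₂ j hi h => ?_⟩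
  · split_ifs with hcb
    · by_contra hne
      exact hc ⟨by_contra fun hcν => hne (hzero c hcν), hcb⟩
    · rfl
  · have := hrange c hc.1
    rw [if_pos hc.2]
    exact ⟨this.1, hc.2⟩
  · have := hrow i j₁ j₂ hj h.1
    split_ifs <;> omega
  · have := hcol i₁ i₂ j hi h.1
    split_ifs <;> omega

def fillStrip (ν : YoungDiagram) (b : ℕ) (l : YoungDiagram) (g : ℕ × ℕ → ℕ) : ℕ × ℕ → ℕ :=
  fun c => if c ∈ l then g c else if c ∈ ν then b + 1 else 0

theorem isSkewSSYT_fillStrip (hg : IsSkewSSYT b ⊥ l g) (hl : IsHorizontalStrip l ν) :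
    IsSkewSSYT (b + 1) ⊥ ν (fillStrip ν b l g) := by
  obtain ⟨hzero, hrange, hrow, hcol⟩ := isSkewSSYT_bot_iff.mp hg
  rw [isSkewSSYT_bot_iff]
  simp only [fillStrip]
  refine ⟨fun c hc => ?_, fun c hc => ?_, fun i j₁ j₂ hj h => ?_, fun i₁ i₂ j hi h => ?_⟩
  · rw [if_neg fun hcl => hc (hl.1 hcl), if_neg hc]
  · split_ifs with hcl
    · have := hrange c hcl
      omega
    · omega
  · by_cases h₂ : (i, j₂) ∈ l
    · rw [if_pos (l.up_left_mem le_rfl hj.le h₂), if_pos h₂]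
      exact hrow i j₁ j₂ hj h₂
    · rw [if_neg h₂, if_pos h]
      split_ifs with h₁
      · exact (hrange _ h₁).2.trans b.le_succ
      · exact le_rfl
      · exact absurd (ν.up_left_mem le_rfl hj.le h) ‹_›
  · have h₁ : (i₁, j) ∈ l :=
      rowLen_le_rowLen_iff.mp ((ν.rowLen_anti _ _ hi).trans (hl.2 i₁)) j h
    rw [if_pos h₁]
    split_ifs with h₂
    · exact hcol i₁ i₂ j hi h₂
    · exact Nat.lt_succ_of_le (hrange _ h₁).2

theorem IsSkewSSYT.sublevel_fillStrip (hg : IsSkewSSYT b ⊥ l g) (hl : IsHorizontalStrip l ν) :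
    (isSkewSSYT_fillStrip hg hl).sublevel b = l := by
  ext c
  simp only [mem_cells, IsSkewSSYT.mem_sublevel, fillStrip]
  have := (isSkewSSYT_bot_iff.mp hg).2.1 c
  by_cases hcl : c ∈ l
  · simp [hcl, hl.1 hcl, (this hcl).2]
  · simp +contextual [hcl]

theorem IsSkewSSYT.truncate_fillStrip (hg : IsSkewSSYT b ⊥ l g) :
    (fun c => if fillStrip ν b l g c ≤ b then fillStrip ν b l g c else 0) = g := by
  obtain ⟨hzero, hrange, -⟩ := isSkewSSYT_bot_iff.mp hg
  funext c
  simp only [fillStrip]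
  by_cases hcl : c ∈ l
  · simp [hcl, (hrange c hcl).2]
  · simp only [hcl, if_false, hzero c hcl]
    split_ifs <;> omega

theorem IsSkewSSYT.fillStrip_sublevel (hf : IsSkewSSYT (b + 1) ⊥ ν f) :
    fillStrip ν b (hf.sublevel b) (fun c => if f c ≤ b then f c else 0) = f := by
  obtain ⟨hzero, hrange, -⟩ := isSkewSSYT_bot_iff.mp hf
  funext c
  simp only [fillStrip, hf.mem_sublevel]
  by_cases hcν : c ∈ ν
  · have := hrange c hcν
    simp only [hcν, true_and, if_true]
    split_ifs <;> omega
  · simp [hcν, hzero c hcν]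

/-- Peeling off the cells with the largest entry `b + 1`. -/
def isSkewSSYTSuccEquiv (b : ℕ) (ν : YoungDiagram) :
    {f // IsSkewSSYT (b + 1) ⊥ ν f} ≃
      Σ l : {l // IsHorizontalStrip l ν}, {g // IsSkewSSYT b ⊥ l.1 g} where
  toFun f := ⟨⟨f.2.sublevel b, f.2.isHorizontalStrip_sublevel⟩, ⟨_, f.2.truncate⟩⟩
  invFun x := ⟨fillStrip ν b x.1 x.2, isSkewSSYT_fillStrip x.2.2 x.1.2⟩
  left_inv f := Subtype.ext f.2.fillStrip_sublevel
  right_inv x := Sigma.subtype_ext (Subtype.ext (x.2.2.sublevel_fillStrip x.1.2))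
    x.2.2.truncate_fillStrip

end Tableau

theorem tsum_ite_eq_tsum_subtype {α β : Type*} [AddCommMonoid β] [TopologicalSpace β]
    (p : α → Prop) [DecidablePred p] (F : α → β) :
    ∑' x, (if p x then F x else 0) = ∑' x : {x // p x}, F x :=
  (tsum_congr fun x => by by_cases h : p x <;> simp [h]).trans (tsum_subtype {x | p x} F).symm

open Classical in
noncomputable def stripWeight (r : ℝ≥0∞) (μ ν : YoungDiagram) : ℝ≥0∞ :=
  if IsHorizontalStrip μ ν then r ^ (ν.card - μ.card) else 0

open Classical in
theorem stripWeight_one_mul (μ ν : YoungDiagram) (x : ℝ≥0∞) :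
    stripWeight 1 μ ν * x = if IsHorizontalStrip μ ν then x else 0 := by
  simp [stripWeight]

theorem dimK_succ_bot (b : ℕ) (ν : YoungDiagram) :
    (DimK (b + 1) ⊥ ν : ℝ≥0∞) = ∑' l, stripWeight 1 l ν * DimK b ⊥ l := by
  simp_rw [stripWeight_one_mul, tsum_ite_eq_tsum_subtype, dimK_bot_eq_tsum,
    ← (isSkewSSYTSuccEquiv b ν).symm.tsum_eq, ENNReal.tsum_sigma']

namespace YoungDiagram

def localRuleInv (a c ν : YoungDiagram) : YoungDiagram :=
  ofRowLen (fun i => c.rowLen i + a.rowLen (i + 1) - ν.rowLen (i + 1)) (c.colLen 0)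

def localRule (a c : YoungDiagram) (n : ℕ) (τ : YoungDiagram) : YoungDiagram :=
  ofRowLen (fun | 0 => a.rowLen 0 + n | i + 1 => c.rowLen i + a.rowLen (i + 1) - τ.rowLen i)
    (c.colLen 0 + 1)

variable {a c ν τ : YoungDiagram}

theorem rowLen_localRuleInv (hca : c ≤ a) (haν : a ≤ ν)
    (hνc : ∀ i, ν.rowLen (i + 1) ≤ c.rowLen i) (i : ℕ) :
    (localRuleInv a c ν).rowLen i = c.rowLen i + a.rowLen (i + 1) - ν.rowLen (i + 1) := by
  rw [le_iff_rowLen_le] at hca haν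
  refine rowLen_ofRowLen (antitone_nat_of_succ_le fun i => ?_) ?_ i
  · have := hca (i + 1); have := haν (i + 1 + 1); have := hνc i
    omega
  · have := haν (c.colLen 0 + 1)
    rw [rowLen_colLen_zero]
    omega

theorem rowLen_localRule (hca : c ≤ a) (hτc : τ ≤ c) (hτa : ∀ i, a.rowLen (i + 1) ≤ τ.rowLen i)
    (n i : ℕ) : (localRule a c n τ).rowLen i = match i with
      | 0 => a.rowLen 0 + n | i + 1 => c.rowLen i + a.rowLen (i + 1) - τ.rowLen i := by
  rw [le_iff_rowLen_le] at hca hτc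
  refine rowLen_ofRowLen (antitone_nat_of_succ_le fun i => ?_) ?_ i
  · rcases i with _ | i
    · have := hca 0; have := hτa 0
      simp only
      omega
    · have := hca (i + 1); have := hτa (i + 1); have := hτc i
      simp only
      omega
  · have := hτa (c.colLen 0)
    simp only [rowLen_colLen_zero]
    omega

theorem card_add_card_localRuleInv (hca : c ≤ a) (haν : a ≤ ν)
    (hνc : ∀ i, ν.rowLen (i + 1) ≤ c.rowLen i) :
    ν.card + (localRuleInv a c ν).card = (ν.rowLen 0 - a.rowLen 0) + (a.card + c.card) := by
  have hrow := rowLen_localRuleInv hca haν hνc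
  rw [le_iff_rowLen_le] at hca haν
  set N := ν.colLen 0
  have hν : ν.rowLen N = 0 := rowLen_colLen_zero ν
  have hνsucc : ν.rowLen (N + 1) = 0 := Nat.eq_zero_of_le_zero (hν ▸ ν.rowLen_anti _ _ N.le_succ)
  have hc : c.rowLen N = 0 := Nat.eq_zero_of_le_zero ((hca N).trans ((haν N).trans hν.le))
  have ha : a.rowLen (N + 1) = 0 := Nat.eq_zero_of_le_zero (hνsucc ▸ haν (N + 1))
  have hτ : (localRuleInv a c ν).rowLen N = 0 := by rw [hrow, hc]; omega
  have hsum : ∑ i ∈ Finset.range N, (ν.rowLen (i + 1) + (localRuleInv a c ν).rowLen i) =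
      ∑ i ∈ Finset.range N, (c.rowLen i + a.rowLen (i + 1)) :=
    Finset.sum_congr rfl fun i _ => by have := hνc i; rw [hrow]; omega
  rw [card_eq_sum_rowLen ν hνsucc, card_eq_sum_rowLen _ hτ, card_eq_sum_rowLen a ha,
    card_eq_sum_rowLen c hc, Finset.sum_range_succ', Finset.sum_range_succ' a.rowLen]
  rw [Finset.sum_add_distrib, Finset.sum_add_distrib] at hsum
  have := haν 0
  omega

theorem localRuleInv_spec (hca : c ≤ a) (haν : a ≤ ν) (hνc : ∀ i, ν.rowLen (i + 1) ≤ c.rowLen i) :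
    localRuleInv a c ν ≤ c ∧ ∀ i, a.rowLen (i + 1) ≤ (localRuleInv a c ν).rowLen i := by
  have hrow := rowLen_localRuleInv hca haν hνc
  refine ⟨le_iff_rowLen_le.mpr fun i => ?_, fun i => ?_⟩ <;> rw [hrow]
  · have := le_iff_rowLen_le.mp haν (i + 1)
    omega
  · have := hνc i
    omega

theorem localRule_spec (hca : c ≤ a) (hτc : τ ≤ c) (hτa : ∀ i, a.rowLen (i + 1) ≤ τ.rowLen i)
    (n : ℕ) : a ≤ localRule a c n τ ∧ ∀ i, (localRule a c n τ).rowLen (i + 1) ≤ c.rowLen i := by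
  have hrow := rowLen_localRule hca hτc hτa n
  refine ⟨le_iff_rowLen_le.mpr fun i => ?_, fun i => ?_⟩ <;> rw [hrow]
  · rcases i with _ | i
    · exact Nat.le_add_right _ _
    · have := le_iff_rowLen_le.mp hτc i
      dsimp only
      omega
  · have := hτa i
    dsimp only
    omega

/-- Fomin's local rule: `ν` corresponds to `ν.rowLen 0 - a.rowLen 0` together with the `τ` whose
row `i` is the reflection of row `i + 1` of `ν` in the interval `[a.rowLen (i + 1), c.rowLen i]`. -/
def localRuleEquiv (hca : c ≤ a) :
    {ν // a ≤ ν ∧ ∀ i, ν.rowLen (i + 1) ≤ c.rowLen i} ≃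
      ℕ × {τ // τ ≤ c ∧ ∀ i, a.rowLen (i + 1) ≤ τ.rowLen i} where
  toFun ν := (ν.1.rowLen 0 - a.rowLen 0, ⟨localRuleInv a c ν, localRuleInv_spec hca ν.2.1 ν.2.2⟩)
  invFun p := ⟨localRule a c p.1 p.2, localRule_spec hca p.2.2.1 p.2.2.2 p.1⟩
  left_inv ν := by
    obtain ⟨ν, haν, hνc⟩ := ν
    obtain ⟨hτc, hτa⟩ := localRuleInv_spec hca haν hνc
    refine Subtype.ext (ext_rowLen fun i => ?_)
    rw [rowLen_localRule hca hτc hτa]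
    rcases i with _ | i
    · have := le_iff_rowLen_le.mp haν 0
      dsimp only
      omega
    · have := hνc i
      dsimp only
      rw [rowLen_localRuleInv hca haν hνc]
      omega
  right_inv p := by
    obtain ⟨n, τ, hτc, hτa⟩ := p
    obtain ⟨haν, hνc⟩ := localRule_spec hca hτc hτa n
    have hrow := rowLen_localRule hca hτc hτa n
    refine Prod.ext ?_ (Subtype.ext (ext_rowLen fun i => ?_))
    · show (localRule a c n τ).rowLen 0 - a.rowLen 0 = n
      rw [hrow]
      dsimp only
      omega
    · have := le_iff_rowLen_le.mp hτc i
      dsimp only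
      rw [rowLen_localRuleInv hca haν hνc, hrow]
      dsimp only
      omega

end YoungDiagram

theorem isHorizontalStrip_and_iff_sup_le {μ l ν : YoungDiagram} :
    IsHorizontalStrip μ ν ∧ IsHorizontalStrip l ν ↔
      μ ⊔ l ≤ ν ∧ ∀ i, ν.rowLen (i + 1) ≤ (μ ⊓ l).rowLen i := by
  simp only [IsHorizontalStrip, le_iff_rowLen_le, rowLen_sup, rowLen_inf, max_le_iff,
    le_min_iff, forall_and]
  tauto

theorem isHorizontalStrip_and_iff_le_inf {τ μ l : YoungDiagram} :
    IsHorizontalStrip τ μ ∧ IsHorizontalStrip τ l ↔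
      τ ≤ μ ⊓ l ∧ ∀ i, (μ ⊔ l).rowLen (i + 1) ≤ τ.rowLen i := by
  simp only [IsHorizontalStrip, le_iff_rowLen_le, rowLen_sup, rowLen_inf, max_le_iff,
    le_min_iff, forall_and]
  tauto

def isHorizontalStripEquiv (μ l : YoungDiagram) :
    {ν // IsHorizontalStrip μ ν ∧ IsHorizontalStrip l ν} ≃
      ℕ × {τ // IsHorizontalStrip τ μ ∧ IsHorizontalStrip τ l} :=
  (Equiv.subtypeEquivRight fun _ => isHorizontalStrip_and_iff_sup_le).trans <|
    (localRuleEquiv inf_le_sup).trans <|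
      Equiv.prodCongrRight fun _ =>
        (Equiv.subtypeEquivRight fun _ => isHorizontalStrip_and_iff_le_inf).symm

theorem card_isHorizontalStripEquiv (μ l : YoungDiagram)
    (ν : {ν // IsHorizontalStrip μ ν ∧ IsHorizontalStrip l ν}) :
    ν.1.card - μ.card = (isHorizontalStripEquiv μ l ν).1 +
      (l.card - (isHorizontalStripEquiv μ l ν).2.1.card) := by
  obtain ⟨hsup, hinf⟩ := isHorizontalStrip_and_iff_sup_le.mp ν.2
  have hcard := card_add_card_localRuleInv inf_le_sup hsup hinf
  have hτ := card_mono ((localRuleInv_spec inf_le_sup hsup hinf).1.trans inf_le_right)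
  have hμ := card_mono (le_sup_left.trans hsup)
  have := card_sup_add_card_inf μ l
  show ν.1.card - μ.card =
    (ν.1.rowLen 0 - (μ ⊔ l).rowLen 0) + (l.card - (localRuleInv (μ ⊔ l) (μ ⊓ l) ν).card)
  omega

open Classical in
theorem tsum_stripWeight_mul_stripWeight_one (r : ℝ≥0∞) (μ l : YoungDiagram) :
    ∑' ν, stripWeight r μ ν * stripWeight 1 l ν =
      (1 - r)⁻¹ * ∑' τ, stripWeight 1 τ μ * stripWeight r τ l := by
  calc ∑' ν, stripWeight r μ ν * stripWeight 1 l ν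
      = ∑' ν, if IsHorizontalStrip μ ν ∧ IsHorizontalStrip l ν then r ^ (ν.card - μ.card)
          else 0 := by
        congr! 2 with ν
        rw [mul_comm, stripWeight_one_mul, stripWeight, ite_and]
        split_ifs <;> rfl
    _ = ∑' ν : {ν // IsHorizontalStrip μ ν ∧ IsHorizontalStrip l ν}, r ^ (ν.1.card - μ.card) :=
        tsum_ite_eq_tsum_subtype _ _
    _ = ∑' p : ℕ × {τ // IsHorizontalStrip τ μ ∧ IsHorizontalStrip τ l},
          r ^ p.1 * r ^ (l.card - p.2.1.card) := by
        rw [← (isHorizontalStripEquiv μ l).tsum_eq]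
        simp_rw [← pow_add, ← card_isHorizontalStripEquiv]
    _ = (∑' n : ℕ, r ^ n) * ∑' τ : {τ // IsHorizontalStrip τ μ ∧ IsHorizontalStrip τ l},
          r ^ (l.card - τ.1.card) := by
        rw [ENNReal.tsum_prod', ← ENNReal.tsum_mul_right]
        simp_rw [ENNReal.tsum_mul_left]
    _ = _ := by
        simp_rw [ENNReal.tsum_geometric, stripWeight_one_mul, stripWeight, ← ite_and,
          tsum_ite_eq_tsum_subtype]

theorem stripWeight_one_mul_pow_card (r : ℝ≥0∞) (μ ν : YoungDiagram) :
    stripWeight 1 μ ν * r ^ ν.card = r ^ μ.card * stripWeight r μ ν := by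
  rw [stripWeight_one_mul, stripWeight]
  split_ifs with h
  · rw [← pow_add, Nat.add_sub_cancel' (card_mono h.1)]
  · rw [mul_zero]

theorem tsum_stripWeight_mul_dimK (r : ℝ≥0∞) (b : ℕ) (μ : YoungDiagram) :
    ∑' ν, stripWeight r μ ν * DimK b ⊥ ν = (1 - r)⁻¹ ^ b * DimK b ⊥ μ := by
  induction b generalizing μ with
  | zero =>
    rw [tsum_eq_single ⊥ fun ν hν => by simp [dimK_zero_bot_of_ne_bot hν]]
    by_cases hμ : μ = ⊥
    · simp [hμ, stripWeight, dimK_bot_bot, isHorizontalStrip_bot_iff]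
    · simp [hμ, stripWeight, dimK_zero_bot_of_ne_bot hμ, isHorizontalStrip_bot_iff]
  | succ b ih =>
    calc ∑' ν, stripWeight r μ ν * DimK (b + 1) ⊥ ν
        = ∑' l, DimK b ⊥ l * ∑' ν, stripWeight r μ ν * stripWeight 1 l ν := by
          simp_rw [dimK_succ_bot, ← ENNReal.tsum_mul_left]
          rw [ENNReal.tsum_comm]
          exact tsum_congr fun _ => tsum_congr fun _ => by ring
      _ = (1 - r)⁻¹ * ∑' τ, stripWeight 1 τ μ * ∑' l, stripWeight r τ l * DimK b ⊥ l := by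
          simp_rw [tsum_stripWeight_mul_stripWeight_one, ← ENNReal.tsum_mul_left]
          rw [ENNReal.tsum_comm]
          exact tsum_congr fun _ => tsum_congr fun _ => by ring
      _ = (1 - r)⁻¹ ^ (b + 1) * DimK (b + 1) ⊥ μ := by
          simp_rw [ih, dimK_succ_bot, ← ENNReal.tsum_mul_left]
          exact tsum_congr fun _ => by ring

theorem tsum_dimK_mul_dimK_mul_pow_card (r : ℝ≥0∞) (a k : ℕ) :
    ∑' ν, (DimK a ⊥ ν : ℝ≥0∞) * DimK k ⊥ ν * r ^ ν.card = (1 - r)⁻¹ ^ (a * k) := by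
  induction a with
  | zero =>
    rw [tsum_eq_single ⊥ fun ν hν => by simp [dimK_zero_bot_of_ne_bot hν]]
    simp [dimK_bot_bot, YoungDiagram.card]
  | succ a ih =>
    calc ∑' ν, (DimK (a + 1) ⊥ ν : ℝ≥0∞) * DimK k ⊥ ν * r ^ ν.card
        = ∑' t, DimK a ⊥ t * r ^ t.card * ∑' ν, stripWeight r t ν * DimK k ⊥ ν := by
          simp_rw [dimK_succ_bot, ← ENNReal.tsum_mul_right, ← ENNReal.tsum_mul_left]
          rw [ENNReal.tsum_comm]
          refine tsum_congr fun t => tsum_congr fun ν => ?_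
          calc _ = stripWeight 1 t ν * r ^ ν.card * (DimK a ⊥ t * DimK k ⊥ ν) := by ring
            _ = _ := by rw [stripWeight_one_mul_pow_card]; ring
      _ = (1 - r)⁻¹ ^ ((a + 1) * k) := by
          simp_rw [tsum_stripWeight_mul_dimK, add_mul, one_mul, pow_add, ← ih,
            ← ENNReal.tsum_mul_right]
          exact tsum_congr fun _ => by ring

theorem sum_DimK_sq_geom_general (k : ℕ) (q : ℝ) (hq0 : 0 ≤ q) (hq1 : q < 1) :
    HasSum (fun ν : YoungDiagram => (DimK k ⊥ ν : ℝ) ^ 2 * q ^ ν.card)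
      (((1 - q) ^ (k ^ 2))⁻¹) := by
  lift q to ℝ≥0 using hq0
  have hq : q < 1 := by exact_mod_cast hq1
  have hsum : HasSum (fun ν => (DimK k ⊥ ν : ℝ≥0) ^ 2 * q ^ ν.card) ((1 - q) ^ (k ^ 2))⁻¹ := by
    rw [← ENNReal.hasSum_coe, ENNReal.coe_inv (pow_ne_zero _ (tsub_pos_of_lt hq).ne'),
      ENNReal.coe_pow, ENNReal.coe_sub, ENNReal.coe_one, ENNReal.inv_pow, sq k,
      ← tsum_dimK_mul_dimK_mul_pow_card]
    push_cast
    simp_rw [sq]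
    exact ENNReal.summable.hasSum
  simpa [NNReal.coe_sub hq.le] using NNReal.hasSum_coe.mpr hsum

/-- Normalization identity for the time-zero marginal of the Geometric RSK process:
`∑_ν Dim_k(ν)² q^{|ν|} = (1-q)^{-k²}`. -/
theorem sum_DimK_sq_geom (k : ℕ) (hk : 1 ≤ k) (q : ℝ) (hq0 : 0 ≤ q) (hq1 : q < 1) :
    HasSum (fun ν : YoungDiagram => (DimK k ⊥ ν : ℝ) ^ 2 * q ^ ν.card)
      (((1 - q) ^ (k ^ 2))⁻¹) :=
  sum_DimK_sq_geom_general k q hq0 hq1
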